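/- Let N be a positive integer, Λ ⊂ ℝ a nonempty closed bounded set with minimum λ_min, and L_1, ..., L_{N+1} exchangeable random functions from Λ to ℝ that are almost surely left-continuous and monotone in λ (each may be either nondecreasing or nonincreasing). Let B : Λ → ℝ be left-continuous and monotone with, for each i, almost surely L_i(λ) ≤ B(λ) for all λ ∈ Λ. Let φ_base : ℝ → ℝ be a real-valued OCE disutility function, define φ(x) := φ_base(max{x,0}), and let R be the OCE risk measure with disutility φ, i.e., R[X] = inf_{s∈ℝ} (s + E[φ(X − s)]). Fix α ∈ ℝ and t ∈ [B(λ_min), α]. Define L̃_{i,t}(λ) := t + φ(L_i(λ) − t), B̃_t(λ) := t + φ(B(λ) − t), h̃_t(λ) := (1/(N+1)) (B̃_t(λ) + Σ_{i=1}^N L̃_{i,t}(λ)), and Λ̂_t := {λ ∈ Λ : h̃_t(λ) ≤ α}. Then for any measurable random variable λ̂ taking values in Λ with λ̂ ∈ Λ̂_t almost surely, R[L_{N+1}(λ̂)] ≤ α, assuming all relevant expectations exist. -/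

import Mathlib

/-!
Put `g i = φbase ((L i - t)⁺)` and `b = φbase ((B - t)⁺)`. The `g i` are monotone on `Λ` (an
antitone `L i` stays below `B λ_min ≤ t`, so its `g i` vanishes), bounded by `b`, and the
hypothesis on `λ̂` reads `b λ̂ + ∑_{i ≤ N} g i λ̂ ≤ K := (N + 1)(α - t)`. Let `G j` be `g j` at the
largest `λ` where `b + ∑_{i ≠ j} g i ≤ K`. Left-continuity gives `g (N+1) λ̂ ≤ G (N+1)`; evaluating
every `G j` at the largest of these points gives `∑ j G j ≤ K`; by exchangeability all `E G j` agree,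
so `E g (N+1) λ̂ ≤ α - t`, and the OCE objective at `s = t` is at most `α`.
-/

open MeasureTheory Set

theorem sum_ciSup_le_of_forall_sum_le {ι κ : Type*} [Fintype ι] [Nonempty κ] {f : ι → κ → ℝ}
    {a : ℝ} (h : ∀ x : ι → κ, ∑ i, f i (x i) ≤ a) : ∑ i, ⨆ k, f i k ≤ a := by
  refine le_of_forall_pos_le_add fun ε hε => ?_
  set δ := ε / (Fintype.card ι + 1)
  have hδ : 0 < δ := by positivity
  choose x hx using fun i => exists_lt_of_lt_ciSup (sub_lt_self (⨆ k, f i k) hδ)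
  have hcard : Fintype.card ι * δ ≤ ε := by
    rw [← mul_div_assoc, div_le_iff₀ (by positivity)]
    nlinarith
  calc ∑ i, ⨆ k, f i k ≤ ∑ i, (f i (x i) + δ) := Finset.sum_le_sum fun i _ => by linarith [hx i]
    _ = ∑ i, f i (x i) + Fintype.card ι * δ := by
      rw [Finset.sum_add_distrib, Finset.sum_const, Finset.card_univ, nsmul_eq_mul]
    _ ≤ a + ε := add_le_add (h x) hcard

theorem IsClosed.exists_rat_indexed_dense_from_left {Λ : Set ℝ} (hΛ : IsClosed Λ)
    (hne : Λ.Nonempty) :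
    ∃ p : ℚ → ℝ, (∀ q, p q ∈ Λ) ∧ ∀ lam ∈ Λ, lam ∈ closure (range p ∩ Iic lam) := by
  classical
  obtain ⟨lam₀, hlam₀⟩ := hne
  have hbdd : ∀ q : ℚ, BddBelow (Λ ∩ Ici (q : ℝ)) := fun q => ⟨q, fun _ hx => hx.2⟩
  have hmem : ∀ q : ℚ, (Λ ∩ Ici (q : ℝ)).Nonempty → sInf (Λ ∩ Ici (q : ℝ)) ∈ Λ ∩ Ici (q : ℝ) :=
    fun q hq => (hΛ.inter isClosed_Ici).csInf_mem hq (hbdd q)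
  -- `p q` is the least point of `Λ` above `q`, so even left-isolated points of `Λ` are values of `p`.
  let p : ℚ → ℝ := fun q => if (Λ ∩ Ici (q : ℝ)).Nonempty then sInf (Λ ∩ Ici (q : ℝ)) else lam₀
  refine ⟨p, fun q => ?_, fun lam hlam => Metric.mem_closure_iff.2 fun ε hε => ?_⟩
  · by_cases hq : (Λ ∩ Ici (q : ℝ)).Nonempty
    · simpa [p, hq] using (hmem q hq).1
    · simpa [p, hq] using hlam₀
  · obtain ⟨q, hεq, hq⟩ := exists_rat_btwn (sub_lt_self lam hε)
    have hne : (Λ ∩ Ici (q : ℝ)).Nonempty := ⟨lam, hlam, hq.le⟩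
    have hpq : p q = sInf (Λ ∩ Ici (q : ℝ)) := if_pos hne
    have hle : p q ≤ lam := hpq ▸ csInf_le (hbdd q) ⟨hlam, hq.le⟩
    refine ⟨p q, ⟨mem_range_self q, hle⟩, ?_⟩
    rw [Real.dist_eq, abs_of_nonneg (sub_nonneg.2 hle)]
    linarith [(hmem q hne).2.out, hpq]

section Cutoff

variable {ι : Type*} [Fintype ι] [DecidableEq ι]

def looScore (b : ℝ → ℝ) (g : ι → ℝ → ℝ) (j : ι) (lam : ℝ) : ℝ :=
  b lam + ∑ i ∈ Finset.univ.erase j, g i lam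

noncomputable def cutoffLoss (b : ℝ → ℝ) (K : ℝ) (g : ι → ℝ → ℝ) (j : ι) (lam : ℝ) : ℝ :=
  if looScore b g j lam ≤ K then g j lam else 0

/-- For monotone losses, `g j` at the last point of the net `p` where the score of index `j` is at
most `K`; the supremum runs over a countable net so that it is measurable in `g`. -/
noncomputable def oracleLoss (p : ℚ → ℝ) (b : ℝ → ℝ) (K : ℝ) (g : ι → ℝ → ℝ) (j : ι) : ℝ :=
  ⨆ q, cutoffLoss b K g j (p q)

variable {Λ : Set ℝ} {b : ℝ → ℝ} {K : ℝ} {g : ι → ℝ → ℝ} {p : ℚ → ℝ}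

theorem looScore_comp_perm (σ : Equiv.Perm ι) (j : ι) :
    looScore b (fun i => g (σ i)) j = looScore b g (σ j) := by
  funext lam
  simp only [looScore, Finset.sum_erase_eq_sub (Finset.mem_univ _),
    Equiv.sum_comp σ fun i => g i lam]

theorem oracleLoss_comp_perm (σ : Equiv.Perm ι) (j : ι) :
    oracleLoss p b K (fun i => g (σ i)) j = oracleLoss p b K g (σ j) := by
  simp only [oracleLoss, cutoffLoss, looScore_comp_perm]

theorem looScore_last {n : ℕ} (g : Fin (n + 1) → ℝ → ℝ) (lam : ℝ) :
    looScore b g (Fin.last n) lam = b lam + ∑ i : Fin n, g i.castSucc lam := by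
  rw [looScore, Finset.sum_erase_eq_sub (Finset.mem_univ _), Fin.sum_univ_castSucc,
    add_sub_cancel_right]

theorem looScore_monotoneOn (hb : MonotoneOn b Λ) (hg : ∀ i, MonotoneOn (g i) Λ) (j : ι) :
    MonotoneOn (looScore b g j) Λ := fun _ hx _ hy hxy =>
  add_le_add (hb hx hy hxy) (Finset.sum_le_sum fun i _ => hg i hx hy hxy)

theorem measurable_oracleLoss (p : ℚ → ℝ) (b : ℝ → ℝ) (K : ℝ) (j : ι) :
    Measurable fun g : ι → ℝ → ℝ => oracleLoss p b K g j := by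
  have heval : ∀ i lam, Measurable fun g : ι → ℝ → ℝ => g i lam := fun i lam =>
    (measurable_pi_apply lam).comp (measurable_pi_apply i)
  refine Measurable.iSup fun q => Measurable.ite ?_ (heval j (p q)) measurable_const
  exact measurableSet_le (measurable_const.add (Finset.measurable_sum _ fun i _ => heval i _))
    measurable_const

theorem cutoffLoss_nonneg (hg0 : ∀ i, ∀ lam ∈ Λ, 0 ≤ g i lam) {lam : ℝ} (hlam : lam ∈ Λ)
    (j : ι) : 0 ≤ cutoffLoss b K g j lam := by
  unfold cutoffLoss
  split_ifs
  exacts [hg0 j lam hlam, le_rfl]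

theorem cutoffLoss_le (hK : 0 ≤ K) (hg0 : ∀ i, ∀ lam ∈ Λ, 0 ≤ g i lam)
    (hgb : ∀ i, ∀ lam ∈ Λ, g i lam ≤ b lam) {lam : ℝ} (hlam : lam ∈ Λ) (j : ι) :
    cutoffLoss b K g j lam ≤ K := by
  unfold cutoffLoss
  split_ifs with h
  · have := Finset.sum_nonneg fun i (_ : i ∈ Finset.univ.erase j) => hg0 i lam hlam
    unfold looScore at h
    linarith [hgb j lam hlam]
  · exact hK

/-- At the largest point `x k` among the active indices, every active loss is at most its value
there, and the score of `k` dominates the sum of all losses at `x k`. -/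
theorem sum_cutoffLoss_le (hK : 0 ≤ K) (hg0 : ∀ i, ∀ lam ∈ Λ, 0 ≤ g i lam)
    (hgb : ∀ i, ∀ lam ∈ Λ, g i lam ≤ b lam) (hg : ∀ i, MonotoneOn (g i) Λ)
    (x : ι → ℝ) (hx : ∀ j, x j ∈ Λ) : ∑ j, cutoffLoss b K g j (x j) ≤ K := by
  set S := Finset.univ.filter fun j => looScore b g j (x j) ≤ K
  rw [show ∑ j, cutoffLoss b K g j (x j) = ∑ j ∈ S, g j (x j) from
    (Finset.sum_filter _ _).symm]
  obtain hS | hS := S.eq_empty_or_nonempty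
  · simpa [hS] using hK
  obtain ⟨k, hkS, hk⟩ := S.exists_max_image x hS
  calc ∑ j ∈ S, g j (x j) ≤ ∑ j ∈ S, g j (x k) :=
        Finset.sum_le_sum fun j hj => hg j (hx j) (hx k) (hk j hj)
    _ ≤ ∑ j, g j (x k) := Finset.sum_le_sum_of_subset_of_nonneg (Finset.subset_univ _)
        fun j _ _ => hg0 j _ (hx k)
    _ = g k (x k) + ∑ j ∈ Finset.univ.erase k, g j (x k) :=
        (Finset.add_sum_erase _ _ (Finset.mem_univ k)).symm
    _ ≤ looScore b g k (x k) := add_le_add_left (hgb k _ (hx k)) _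
    _ ≤ K := (Finset.mem_filter.1 hkS).2

theorem bddAbove_range_cutoffLoss (hK : 0 ≤ K) (hg0 : ∀ i, ∀ lam ∈ Λ, 0 ≤ g i lam)
    (hgb : ∀ i, ∀ lam ∈ Λ, g i lam ≤ b lam) (hp : ∀ q, p q ∈ Λ) (j : ι) :
    BddAbove (range fun q => cutoffLoss b K g j (p q)) :=
  ⟨K, forall_mem_range.2 fun q => cutoffLoss_le hK hg0 hgb (hp q) j⟩

theorem oracleLoss_nonneg (hK : 0 ≤ K) (hg0 : ∀ i, ∀ lam ∈ Λ, 0 ≤ g i lam)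
    (hgb : ∀ i, ∀ lam ∈ Λ, g i lam ≤ b lam) (hp : ∀ q, p q ∈ Λ) (j : ι) :
    0 ≤ oracleLoss p b K g j :=
  le_ciSup_of_le (bddAbove_range_cutoffLoss hK hg0 hgb hp j) 0 (cutoffLoss_nonneg hg0 (hp 0) j)

theorem sum_oracleLoss_le (hK : 0 ≤ K) (hg0 : ∀ i, ∀ lam ∈ Λ, 0 ≤ g i lam)
    (hgb : ∀ i, ∀ lam ∈ Λ, g i lam ≤ b lam) (hg : ∀ i, MonotoneOn (g i) Λ)
    (hp : ∀ q, p q ∈ Λ) : ∑ j, oracleLoss p b K g j ≤ K :=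
  sum_ciSup_le_of_forall_sum_le fun x => sum_cutoffLoss_le hK hg0 hgb hg _ fun j => hp (x j)

theorem oracleLoss_le (hK : 0 ≤ K) (hg0 : ∀ i, ∀ lam ∈ Λ, 0 ≤ g i lam)
    (hgb : ∀ i, ∀ lam ∈ Λ, g i lam ≤ b lam) (hg : ∀ i, MonotoneOn (g i) Λ)
    (hp : ∀ q, p q ∈ Λ) (j : ι) : oracleLoss p b K g j ≤ K :=
  (Finset.single_le_sum (fun i _ => oracleLoss_nonneg hK hg0 hgb hp i) (Finset.mem_univ j)).trans
    (sum_oracleLoss_le hK hg0 hgb hg hp)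

/-- Left-continuity lets the loss at `lam` be approached from the net below `lam`, where the
monotone score stays below its value at `lam`. -/
theorem le_oracleLoss (hK : 0 ≤ K) (hg0 : ∀ i, ∀ lam ∈ Λ, 0 ≤ g i lam)
    (hgb : ∀ i, ∀ lam ∈ Λ, g i lam ≤ b lam) (hp : ∀ q, p q ∈ Λ)
    (hdense : ∀ lam ∈ Λ, lam ∈ closure (range p ∩ Iic lam)) {j : ι}
    (hscore_mono : MonotoneOn (looScore b g j) Λ) {lam : ℝ} (hlam : lam ∈ Λ)
    (hcont : ContinuousWithinAt (g j) (Λ ∩ Iic lam) lam) (hscore : looScore b g j lam ≤ K) :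
    g j lam ≤ oracleLoss p b K g j := by
  have hsub : range p ∩ Iic lam ⊆ Λ ∩ Iic lam :=
    inter_subset_inter_left _ (range_subset_iff.2 hp)
  have hbound : g j '' (range p ∩ Iic lam) ⊆ Iic (oracleLoss p b K g j) := by
    rintro _ ⟨_, ⟨⟨q, rfl⟩, hq⟩, rfl⟩
    have hactive : cutoffLoss b K g j (p q) = g j (p q) :=
      if_pos ((hscore_mono (hp q) hlam hq).trans hscore)
    exact hactive ▸ le_ciSup (bddAbove_range_cutoffLoss hK hg0 hgb hp j) q
  exact closure_minimal hbound isClosed_Iic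
    ((hcont.mono hsub).mem_closure_image (hdense lam hlam))

end Cutoff

def Exchangeable {Ω ι β : Type*} [MeasurableSpace Ω] [MeasurableSpace β] (ℙ : Measure Ω)
    (X : ι → Ω → β) : Prop :=
  ∀ σ : Equiv.Perm ι, ℙ.map (fun ω i => X (σ i) ω) = ℙ.map (fun ω i => X i ω)

namespace Exchangeable

variable {Ω ι β γ : Type*} [MeasurableSpace Ω] [MeasurableSpace β] [MeasurableSpace γ]
  {ℙ : Measure Ω} {X : ι → Ω → β}

theorem comp (hX : Exchangeable ℙ X) (hmeas : ∀ i, Measurable (X i)) {Φ : β → γ}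
    (hΦ : Measurable Φ) : Exchangeable ℙ fun i ω => Φ (X i ω) := by
  intro σ
  have hΦι : Measurable fun (x : ι → β) i => Φ (x i) :=
    measurable_pi_lambda _ fun i => hΦ.comp (measurable_pi_apply i)
  have h := congrArg (Measure.map fun (x : ι → β) i => Φ (x i)) (hX σ)
  rwa [Measure.map_map hΦι (measurable_pi_lambda _ fun i => hmeas (σ i)),
    Measure.map_map hΦι (measurable_pi_lambda _ hmeas)] at h

variable [DecidableEq ι]

theorem integral_comp_eq (hX : Exchangeable ℙ X) (hmeas : ∀ i, Measurable (X i))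
    {F : ι → (ι → β) → ℝ} (hF : ∀ j, Measurable (F j))
    (hFσ : ∀ (σ : Equiv.Perm ι) j x, F j (fun i => x (σ i)) = F (σ j) x) (j k : ι) :
    ∫ ω, F j (fun i => X i ω) ∂ℙ = ∫ ω, F k (fun i => X i ω) ∂ℙ := by
  set σ := Equiv.swap j k
  have hXσ : Measurable fun ω i => X (σ i) ω := measurable_pi_lambda _ fun i => hmeas (σ i)
  have hX1 : Measurable fun ω i => X i ω := measurable_pi_lambda _ hmeas
  calc ∫ ω, F j (fun i => X i ω) ∂ℙ = ∫ x, F j x ∂(ℙ.map fun ω i => X i ω) :=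
        (integral_map hX1.aemeasurable (hF j).aestronglyMeasurable).symm
    _ = ∫ x, F j x ∂(ℙ.map fun ω i => X (σ i) ω) := by rw [hX σ]
    _ = ∫ ω, F j (fun i => X (σ i) ω) ∂ℙ :=
        integral_map hXσ.aemeasurable (hF j).aestronglyMeasurable
    _ = ∫ ω, F k (fun i => X i ω) ∂ℙ := by
        refine integral_congr_ae (ae_of_all _ fun ω => ?_)
        exact (hFσ σ j fun i => X i ω).trans (by rw [Equiv.swap_apply_left])

theorem card_mul_integral_le [Fintype ι] [IsProbabilityMeasure ℙ] (hX : Exchangeable ℙ X)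
    (hmeas : ∀ i, Measurable (X i)) {F : ι → (ι → β) → ℝ} (hF : ∀ j, Measurable (F j))
    (hFσ : ∀ (σ : Equiv.Perm ι) j x, F j (fun i => x (σ i)) = F (σ j) x)
    (hint : ∀ j, Integrable (fun ω => F j fun i => X i ω) ℙ) {K : ℝ}
    (hsum : ∀ᵐ ω ∂ℙ, ∑ j, F j (fun i => X i ω) ≤ K) (j : ι) :
    Fintype.card ι * ∫ ω, F j (fun i => X i ω) ∂ℙ ≤ K := by
  calc Fintype.card ι * ∫ ω, F j (fun i => X i ω) ∂ℙ = ∑ k, ∫ ω, F k (fun i => X i ω) ∂ℙ := by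
        simp [integral_comp_eq hX hmeas hF hFσ _ j]
    _ = ∫ ω, ∑ k, F k (fun i => X i ω) ∂ℙ := (integral_finsetSum _ fun k _ => hint k).symm
    _ ≤ ∫ _, K ∂ℙ := integral_mono_ae (integrable_finsetSum _ fun k _ => hint k)
        (integrable_const K) hsum
    _ = K := by simp

end Exchangeable

theorem conformal_risk_control {Ω ι : Type*} [MeasurableSpace Ω] {ℙ : Measure Ω}
    [IsProbabilityMeasure ℙ] [Fintype ι] [DecidableEq ι] {Λ : Set ℝ} (hΛ : IsClosed Λ)
    (hΛne : Λ.Nonempty) {g : ι → Ω → ℝ → ℝ} (hmeas : ∀ i, Measurable (g i))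
    (hexch : Exchangeable ℙ g) (hg0 : ∀ i, ∀ᵐ ω ∂ℙ, ∀ lam ∈ Λ, 0 ≤ g i ω lam)
    (hgmono : ∀ i, ∀ᵐ ω ∂ℙ, MonotoneOn (g i ω) Λ) {b : ℝ → ℝ} (hbmono : MonotoneOn b Λ)
    (hgb : ∀ i, ∀ᵐ ω ∂ℙ, ∀ lam ∈ Λ, g i ω lam ≤ b lam) {K : ℝ} (hK : 0 ≤ K) {j : ι}
    {lamHat : Ω → ℝ} (hmem : ∀ᵐ ω ∂ℙ, lamHat ω ∈ Λ)
    (hcont : ∀ᵐ ω ∂ℙ, ContinuousWithinAt (g j ω) (Λ ∩ Iic (lamHat ω)) (lamHat ω))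
    (hscore : ∀ᵐ ω ∂ℙ, looScore b (fun i => g i ω) j (lamHat ω) ≤ K) :
    Fintype.card ι * ∫ ω, g j ω (lamHat ω) ∂ℙ ≤ K := by
  obtain ⟨p, hp, hdense⟩ := hΛ.exists_rat_indexed_dense_from_left hΛne
  have hgood : ∀ᵐ ω ∂ℙ, (∀ i, ∀ lam ∈ Λ, 0 ≤ g i ω lam) ∧ (∀ i, ∀ lam ∈ Λ, g i ω lam ≤ b lam) ∧
      ∀ i, MonotoneOn (g i ω) Λ := by
    filter_upwards [ae_all_iff.2 hg0, ae_all_iff.2 hgb, ae_all_iff.2 hgmono] with ω h0 hb hm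
    exact ⟨h0, hb, hm⟩
  have hint : ∀ k, Integrable (fun ω => oracleLoss p b K (fun i => g i ω) k) ℙ := fun k =>
    (integrable_const K).mono'
      ((measurable_oracleLoss p b K k).comp (measurable_pi_lambda _ hmeas)).aestronglyMeasurable
      (by
        filter_upwards [hgood] with ω ⟨h0, hb, hm⟩
        rw [Real.norm_eq_abs, abs_of_nonneg (oracleLoss_nonneg hK h0 hb hp k)]
        exact oracleLoss_le hK h0 hb hm hp k)
  have hsum : ∀ᵐ ω ∂ℙ, ∑ k, oracleLoss p b K (fun i => g i ω) k ≤ K := by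
    filter_upwards [hgood] with ω ⟨h0, hb, hm⟩ using sum_oracleLoss_le hK h0 hb hm hp
  have hle : ∀ᵐ ω ∂ℙ, g j ω (lamHat ω) ≤ oracleLoss p b K (fun i => g i ω) j := by
    filter_upwards [hgood, hmem, hcont, hscore] with ω ⟨h0, hb, hm⟩ hω hcω hsω
    exact le_oracleLoss hK h0 hb hp hdense (looScore_monotoneOn hbmono hm j) hω hcω hsω
  have hnonneg : ∀ᵐ ω ∂ℙ, 0 ≤ g j ω (lamHat ω) := by
    filter_upwards [hg0 j, hmem] with ω h0 hω using h0 _ hω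
  calc Fintype.card ι * ∫ ω, g j ω (lamHat ω) ∂ℙ
      ≤ Fintype.card ι * ∫ ω, oracleLoss p b K (fun i => g i ω) j ∂ℙ :=
        mul_le_mul_of_nonneg_left (integral_mono_of_nonneg hnonneg (hint j) hle) (Nat.cast_nonneg _)
    _ ≤ K := hexch.card_mul_integral_le hmeas (fun k => measurable_oracleLoss p b K k)
        (fun σ k g => oracleLoss_comp_perm σ k) hint hsum j

noncomputable def oceRisk {Ω : Type*} [MeasurableSpace Ω] (ℙ : Measure Ω) (φ : ℝ → ℝ)
    (X : Ω → ℝ) : ℝ :=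
  ⨅ s : ℝ, (s + ∫ ω, φ (X ω - s) ∂ℙ)

/-- `x ≤ φ x` bounds the objective below by `E X`, so the infimum is not the junk value `0`. -/
theorem oceRisk_le {Ω : Type*} [MeasurableSpace Ω] {ℙ : Measure Ω} [IsProbabilityMeasure ℙ]
    {φ : ℝ → ℝ} (hφ : ∀ x, x ≤ φ x) {X : Ω → ℝ} (hX : Integrable X ℙ)
    (hφX : ∀ s, Integrable (fun ω => φ (X ω - s)) ℙ) (t : ℝ) :
    oceRisk ℙ φ X ≤ t + ∫ ω, φ (X ω - t) ∂ℙ := by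
  refine ciInf_le ⟨∫ ω, X ω ∂ℙ, forall_mem_range.2 fun s => ?_⟩ t
  have h : ∫ ω, (X ω - s) ∂ℙ ≤ ∫ ω, φ (X ω - s) ∂ℙ :=
    integral_mono (hX.sub (integrable_const s)) (hφX s) fun ω => hφ (X ω - s)
  rw [integral_sub hX (integrable_const s), integral_const, probReal_univ, one_smul] at h
  linarith

theorem monotoneOn_comp_of_monotoneOn_or_antitoneOn {φ f : ℝ → ℝ} {Λ : Set ℝ} {m t : ℝ}
    (hφ : Monotone φ) (hφt : ∀ x ≤ t, φ x = 0) (hf : MonotoneOn f Λ ∨ AntitoneOn f Λ)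
    (hm : IsLeast Λ m) (hfm : f m ≤ t) : MonotoneOn (φ ∘ f) Λ := by
  rcases hf with hf | hf
  · exact hφ.comp_monotoneOn hf
  · have hzero : ∀ x ∈ Λ, φ (f x) = 0 := fun x hx => hφt _ ((hf hm.1 hx (hm.2 hx)).trans hfm)
    intro x hx y hy _
    simp only [Function.comp_apply, hzero x hx, hzero y hy, le_refl]

theorem shifted_average_le_iff {n : ℕ} (t α x : ℝ) (y : Fin n → ℝ) :
    ((t + x) + ∑ i, (t + y i)) / (n + 1) ≤ α ↔ x + ∑ i, y i ≤ (n + 1) * (α - t) := by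
  rw [div_le_iff₀ (by positivity), Finset.sum_add_distrib, Finset.sum_const, Finset.card_univ,
    Fintype.card_fin, nsmul_eq_mul]
  constructor <;> intro h <;> linarith

theorem stmt_5_general
    {Ω : Type*} [MeasurableSpace Ω] (ℙ : Measure Ω) [IsProbabilityMeasure ℙ]
    (N : ℕ)
    (Λ : Set ℝ) (hΛclosed : IsClosed Λ)
    (lamMin : ℝ) (hMin : IsLeast Λ lamMin)
    (L : Fin (N + 1) → Ω → ℝ → ℝ)
    (hLmeas : ∀ i, Measurable fun ω => L i ω)
    (hExch : ∀ σ : Equiv.Perm (Fin (N + 1)),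
      Measure.map (fun ω => fun i => L (σ i) ω) ℙ
        = Measure.map (fun ω => fun i => L i ω) ℙ)
    (hLleftCont : ∀ i, ∀ᵐ ω ∂ℙ, ∀ lam ∈ Λ,
      ContinuousWithinAt (L i ω) (Λ ∩ Iic lam) lam)
    (hLmono : ∀ i, ∀ᵐ ω ∂ℙ, MonotoneOn (L i ω) Λ ∨ AntitoneOn (L i ω) Λ)
    (B : ℝ → ℝ)
    (hBmono : MonotoneOn B Λ ∨ AntitoneOn B Λ)
    (hLB : ∀ i, ∀ᵐ ω ∂ℙ, ∀ lam ∈ Λ, L i ω lam ≤ B lam)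
    (φbase : ℝ → ℝ)
    (hφmono : Monotone φbase) (hφconv : ConvexOn ℝ univ φbase)
    (hφ0 : φbase 0 = 0)
    (hφsub : ∀ x : ℝ, x ≤ φbase x)
    (α t : ℝ) (ht : t ∈ Icc (B lamMin) α)
    (htilde : Ω → ℝ → ℝ)
    (hdef : ∀ ω lam, htilde ω lam =
      ((t + φbase (max (B lam - t) 0))
        + ∑ i : Fin N, (t + φbase (max (L i.castSucc ω lam - t) 0))) / (N + 1))
    (lamHat : Ω → ℝ)
    (hlamHatΛ : ∀ᵐ ω ∂ℙ, lamHat ω ∈ Λ)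
    (hlamHatIn : ∀ᵐ ω ∂ℙ, htilde ω (lamHat ω) ≤ α)
    (hInt : Integrable (fun ω => L (Fin.last N) ω (lamHat ω)) ℙ)
    (hIntφ : ∀ s : ℝ,
      Integrable (fun ω => φbase (max (L (Fin.last N) ω (lamHat ω) - s) 0)) ℙ) :
    (⨅ s : ℝ,
      (s + ∫ ω, φbase (max (L (Fin.last N) ω (lamHat ω) - s) 0) ∂ℙ)) ≤ α := by
  obtain ⟨hBt, htα⟩ := ht
  set phi : ℝ → ℝ := fun x => φbase (max (x - t) 0)
  have hphi_mono : Monotone phi := fun x y h => hφmono (max_le_max (sub_le_sub_right h t) le_rfl)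
  have hphi_cont : Continuous phi := hφconv.locallyLipschitz.continuous.comp (by fun_prop)
  have hphi_zero : ∀ x ≤ t, phi x = 0 := fun x hx => by
    simp only [phi, max_eq_right (sub_nonpos.2 hx), hφ0]
  have hphi_meas : Measurable fun f : ℝ → ℝ => phi ∘ f :=
    measurable_pi_lambda _ fun lam => hphi_cont.measurable.comp (measurable_pi_apply lam)
  have hrisk : ((N : ℝ) + 1) * ∫ ω, phi (L (Fin.last N) ω (lamHat ω)) ∂ℙ
      ≤ (N + 1) * (α - t) := by
    simpa using conformal_risk_control (g := fun i ω => phi ∘ L i ω) hΛclosed ⟨lamMin, hMin.1⟩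
      (fun i => hphi_meas.comp (hLmeas i)) (Exchangeable.comp hExch hLmeas hphi_meas)
      (fun i => ae_of_all _ fun ω x _ => (le_max_right _ _).trans (hφsub _))
      (fun i => by
        filter_upwards [hLmono i, hLB i] with ω hmono hle
        exact monotoneOn_comp_of_monotoneOn_or_antitoneOn hphi_mono hphi_zero hmono hMin
          ((hle lamMin hMin.1).trans hBt))
      (monotoneOn_comp_of_monotoneOn_or_antitoneOn hphi_mono hphi_zero hBmono hMin hBt)
      (fun i => by filter_upwards [hLB i] with ω hle lam hlam using hphi_mono (hle lam hlam))
      (by nlinarith) hlamHatΛ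
      (by
        filter_upwards [hLleftCont (Fin.last N), hlamHatΛ] with ω hcont hmem
        exact hphi_cont.continuousAt.comp_continuousWithinAt (hcont _ hmem))
      (by
        filter_upwards [hlamHatIn] with ω hle
        rw [looScore_last]
        exact (shifted_average_le_iff _ _ _ _).1 (hdef ω _ ▸ hle))
  calc oceRisk ℙ (fun x => φbase (max x 0)) (fun ω => L (Fin.last N) ω (lamHat ω))
      ≤ t + ∫ ω, phi (L (Fin.last N) ω (lamHat ω)) ∂ℙ :=
        oceRisk_le (fun x => (le_max_left x 0).trans (hφsub _)) hInt hIntφ t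
    _ ≤ α := by
      have := le_of_mul_le_mul_left hrisk (by positivity)
      linarith

/-- **Conformal OCE risk control for monotone losses (Proposition B.4).**
With exchangeable losses that are a.s. left-continuous and *monotone* (each either
nondecreasing or nonincreasing) on `Λ`, `B` left-continuous and monotone with
`L i ≤ B` a.s. pointwise on `Λ`, a real-valued OCE disutility `φ_base`, the transformed
disutility `φ(x) = φ_base(max x 0)`, and `t ∈ [B(λ_min), α]`, define
`h̃_t ω λ = ((t + φ(B λ - t)) + ∑_{i<N} (t + φ(L i ω λ - t)))/(N+1)`.
Any measurable `lamHat` valued in `Λ` with `h̃_t ω (lamHat ω) ≤ α` a.s. satisfies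
`R[L_{N+1}(lamHat)] = ⨅ s, (s + E[φ_base(max (L_{N+1}(lamHat) - s) 0)]) ≤ α`. -/
theorem stmt_5
    {Ω : Type*} [MeasurableSpace Ω] (ℙ : Measure Ω) [IsProbabilityMeasure ℙ]
    (N : ℕ) (hN : 0 < N)
    (Λ : Set ℝ) (hΛne : Λ.Nonempty) (hΛclosed : IsClosed Λ)
    (hΛbdd : Bornology.IsBounded Λ)
    (lamMin : ℝ) (hMin : IsLeast Λ lamMin)
    (L : Fin (N + 1) → Ω → ℝ → ℝ)
    (hLmeas : ∀ i, Measurable fun ω => L i ω)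
    (hExch : ∀ σ : Equiv.Perm (Fin (N + 1)),
      Measure.map (fun ω => fun i => L (σ i) ω) ℙ
        = Measure.map (fun ω => fun i => L i ω) ℙ)
    (hLleftCont : ∀ i, ∀ᵐ ω ∂ℙ, ∀ lam ∈ Λ,
      ContinuousWithinAt (L i ω) (Λ ∩ Iic lam) lam)
    (hLmono : ∀ i, ∀ᵐ ω ∂ℙ, MonotoneOn (L i ω) Λ ∨ AntitoneOn (L i ω) Λ)
    (B : ℝ → ℝ)
    (hBleftCont : ∀ lam ∈ Λ, ContinuousWithinAt B (Λ ∩ Iic lam) lam)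
    (hBmono : MonotoneOn B Λ ∨ AntitoneOn B Λ)
    (hLB : ∀ i, ∀ᵐ ω ∂ℙ, ∀ lam ∈ Λ, L i ω lam ≤ B lam)
    (φbase : ℝ → ℝ)
    (hφmono : Monotone φbase) (hφconv : ConvexOn ℝ univ φbase)
    (hφlsc : LowerSemicontinuous φbase) (hφ0 : φbase 0 = 0)
    (hφsub : ∀ x : ℝ, x ≤ φbase x)
    (α t : ℝ) (ht : t ∈ Icc (B lamMin) α)
    (htilde : Ω → ℝ → ℝ)
    (hdef : ∀ ω lam, htilde ω lam =
      ((t + φbase (max (B lam - t) 0))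
        + ∑ i : Fin N, (t + φbase (max (L i.castSucc ω lam - t) 0))) / (N + 1))
    (lamHat : Ω → ℝ) (hlamHatMeas : Measurable lamHat)
    (hlamHatΛ : ∀ᵐ ω ∂ℙ, lamHat ω ∈ Λ)
    (hlamHatIn : ∀ᵐ ω ∂ℙ, htilde ω (lamHat ω) ≤ α)
    (hInt : Integrable (fun ω => L (Fin.last N) ω (lamHat ω)) ℙ)
    (hIntφ : ∀ s : ℝ,
      Integrable (fun ω => φbase (max (L (Fin.last N) ω (lamHat ω) - s) 0)) ℙ) :
    (⨅ s : ℝ,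
      (s + ∫ ω, φbase (max (L (Fin.last N) ω (lamHat ω) - s) 0) ∂ℙ)) ≤ α :=
  stmt_5_general ℙ N Λ hΛclosed lamMin hMin L hLmeas hExch hLleftCont hLmono B hBmono hLB φbase
    hφmono hφconv hφ0 hφsub α t ht htilde hdef lamHat hlamHatΛ hlamHatIn hInt hIntφ
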